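/- Let m ≥ 4 be even and n an odd positive integer coprime to m; set q = exp(2πi·n/m) and M = m/2 (so q^M = −1). Let λ be a nonnegative integer with 2·n·λ < m, and set μ = λ + M. On V = ℂ^{λ+1} with basis e_0,…,e_λ define H·e_k = (μ − 2k)·e_k, X⁻·e_k = e_{k+1} (with e_{λ+1} := 0), and X⁺·e_k = [k]_q·[μ−k+1]_q·e_{k−1} (with e_{−1} := 0). Then: (i) H·X^± − X^±·H = ±2·X^±, (X⁺X⁻ − X⁻X⁺)·e_k = [μ−2k]_q·e_k for all 0 ≤ k ≤ λ, and (X⁺)^M = (X⁻)^M = 0; (ii) the Hermitian inner product ⟨e_k, e_l⟩ = δ_{kl}·∏_{j=1}^{k} [j]_q·[λ−j+1]_q is positive definite; (iii) with respect to it, ⟨X^±·v, w⟩ = −⟨v, X^∓·w⟩ and ⟨H·v, w⟩ = ⟨v, H·w⟩ for all v, w ∈ V. Thus V is a finite-dimensional unitary highest-weight representation of the noncompact real form (X^±)* = −X^∓, H* = H of U_q^{fin}(sl(2,ℝ)) at the even root of unity q. -/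

import Mathlib

/-!
Write `q = exp (iθ)` with `θ = 2πn/m`. Then `[k]_q = sin kθ / sin θ` is real, and it is positive
for `1 ≤ k ≤ λ` because `λθ < π`; hence all weights `g k` of the form are positive. Since
`q^M = -1`, `[x + M]_q = -[x]_q`, so `X⁺ e_{k+1} = -[k+1][λ-k] e_k`. This coefficient vanishes for
`k = λ`, so truncating the chain at `e_λ` is compatible with the relations, and it equals
`-g (k+1) / g k`, which is exactly `⟨X⁺ v, w⟩ = -⟨v, X⁻ w⟩` on basis vectors. The commutator
`[X⁺, X⁻] e_k` is the difference of two consecutive coefficients, equal to `[μ - 2k]_q` by the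
identity `[a+1][b-a] - [a][b-a+1] = [b-2a]`.
-/

open scoped ComplexOrder

/-- When `q - q⁻¹ = 0` this is `0` for every `k` (division by zero), so the algebraic identities
below hold for all `q`. -/
def qInt {K : Type*} [Field K] (q : K) (k : ℤ) : K := (q ^ k - q ^ (-k)) / (q - q⁻¹)

section QInt

variable {K : Type*} [Field K] {q : K}

@[simp] lemma qInt_zero : qInt q 0 = 0 := by simp [qInt]

lemma qInt_add_of_pow_eq_neg_one {M : ℕ} (hM : q ^ M = -1) (k : ℤ) :
    qInt q (k + M) = -qInt q k := by
  rcases eq_or_ne q 0 with rfl | hq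
  · simp [qInt]
  have hMz : q ^ (M : ℤ) = -1 := by rw [zpow_natCast, hM]
  simp only [qInt, neg_add, zpow_add₀ hq, zpow_neg q (M : ℤ), hMz]
  ring

lemma qInt_succ_mul_sub (a b : ℤ) :
    qInt q (a + 1) * qInt q (b - a) - qInt q a * qInt q (b - a + 1) = qInt q (b - 2 * a) := by
  rcases eq_or_ne (q - q⁻¹) 0 with hs | hs
  · simp [qInt, hs]
  have hq : q ≠ 0 := by rintro rfl; simp at hs
  have := zpow_ne_zero a hq
  have := zpow_ne_zero b hq
  simp only [qInt, div_mul_div_comm, ← sub_div]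
  rw [div_eq_div_iff (mul_ne_zero hs hs) hs]
  simp only [zpow_add₀ hq, zpow_sub₀ hq, zpow_neg, zpow_one, two_mul]
  field_simp
  ring

end QInt

section QIntExp

open Complex

lemma zpow_sub_zpow_neg_exp_mul_I (θ : ℝ) (k : ℤ) :
    exp (θ * I) ^ k - exp (θ * I) ^ (-k) = 2 * Real.sin (k * θ) * I := by
  simp only [← exp_int_mul, ← mul_assoc, Int.cast_neg, neg_mul]
  rw [← neg_mul, exp_mul_I, exp_mul_I, cos_neg, sin_neg]
  push_cast
  ring

lemma qInt_exp_mul_I (θ : ℝ) (k : ℤ) :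
    qInt (exp (θ * I)) k = ((Real.sin (k * θ) / Real.sin θ : ℝ) : ℂ) := by
  have h1 := zpow_sub_zpow_neg_exp_mul_I θ 1
  rw [zpow_one, zpow_neg_one, Int.cast_one, one_mul] at h1
  rw [qInt, zpow_sub_zpow_neg_exp_mul_I, h1, mul_div_mul_right _ _ I_ne_zero,
    mul_div_mul_left _ _ two_ne_zero, ofReal_div]

lemma conj_qInt_exp_mul_I (θ : ℝ) (k : ℤ) :
    starRingEnd ℂ (qInt (exp (θ * I)) k) = qInt (exp (θ * I)) k := by
  rw [qInt_exp_mul_I, conj_ofReal]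

lemma qInt_exp_mul_I_pos {θ : ℝ} (hθ : 0 < θ) {t : ℤ} (ht : 1 ≤ t) (htθ : t * θ < Real.pi) :
    0 < qInt (exp (θ * I)) t := by
  have ht' : (1 : ℝ) ≤ t := by exact_mod_cast ht
  have hθπ : θ < Real.pi := by nlinarith
  rw [qInt_exp_mul_I, zero_lt_real]
  exact div_pos (Real.sin_pos_of_pos_of_lt_pi (by positivity) htθ)
    (Real.sin_pos_of_pos_of_lt_pi hθ hθπ)

lemma exp_two_pi_mul_I_div_eq_exp_mul_I (n m : ℕ) :
    exp (2 * Real.pi * I * n / m) = exp ((2 * Real.pi * n / m : ℝ) * I) := by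
  push_cast
  ring_nf

lemma exp_two_pi_mul_I_div_pow_half {n m : ℕ} (hm : Even m) (hn : Odd n) (hm0 : m ≠ 0) :
    exp (2 * Real.pi * I * n / m) ^ (m / 2) = -1 := by
  obtain ⟨M, rfl⟩ := hm
  have hM : (M : ℂ) ≠ 0 := by norm_cast; omega
  rw [← exp_nat_mul, show (M + M) / 2 = M by omega,
    show (M : ℂ) * (2 * Real.pi * I * n / ((M + M : ℕ) : ℂ)) = n * (Real.pi * I) by
      push_cast; field_simp; ring,
    exp_nat_mul, exp_pi_mul_I, hn.neg_one_pow]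

lemma conj_qInt_exp_two_pi_mul_I_div (n m : ℕ) (k : ℤ) :
    starRingEnd ℂ (qInt (exp (2 * Real.pi * I * n / m)) k) =
      qInt (exp (2 * Real.pi * I * n / m)) k := by
  rw [exp_two_pi_mul_I_div_eq_exp_mul_I, conj_qInt_exp_mul_I]

lemma qInt_exp_two_pi_mul_I_div_pos {n m lam : ℕ} (hlam : 2 * n * lam < m) (hn : 0 < n)
    {t : ℤ} (ht : 1 ≤ t) (htlam : t ≤ lam) : 0 < qInt (exp (2 * Real.pi * I * n / m)) t := by
  have hm : (0 : ℝ) < m := by norm_cast; omega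
  have hlam' : (2 * n * lam : ℝ) < m := by exact_mod_cast hlam
  have htlam' : (t : ℝ) ≤ lam := by exact_mod_cast htlam
  rw [exp_two_pi_mul_I_div_eq_exp_mul_I]
  refine qInt_exp_mul_I_pos (by positivity) ht ?_
  rw [mul_div_assoc', div_lt_iff₀ hm]
  nlinarith [mul_le_mul_of_nonneg_right htlam' (by positivity : (0 : ℝ) ≤ 2 * Real.pi * n),
    mul_lt_mul_of_pos_left hlam' Real.pi_pos]

end QIntExp

/-- The convention `e_k = 0` for `k > n` matches the paper's `e_{λ+1} := 0`. -/
def natSingle (R : Type*) [Zero R] [One R] (n k : ℕ) : Fin (n + 1) → R :=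
  if h : k < n + 1 then Pi.single ⟨k, h⟩ 1 else 0

section NatSingle

variable {R : Type*} {n k : ℕ}

lemma natSingle_val [Zero R] [One R] (i : Fin (n + 1)) : natSingle R n i = Pi.single i 1 := by
  rw [natSingle, dif_pos i.isLt]

lemma natSingle_of_lt [Zero R] [One R] (h : n < k) : natSingle R n k = 0 := by
  simp [natSingle, show ¬k < n + 1 by omega]

lemma LinearMap.ext_natSingle [Semiring R] {M : Type*} [AddCommMonoid M] [Module R M]
    {f f' : (Fin (n + 1) → R) →ₗ[R] M}
    (h : ∀ k ≤ n, f (natSingle R n k) = f' (natSingle R n k)) : f = f' :=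
  (Pi.basisFun R (Fin (n + 1))).ext fun i => by
    simpa [natSingle_val] using h i (Nat.lt_succ_iff.mp i.isLt)

lemma LinearMap.apply_natSingle_eq_smul [Semiring R] {f : Module.End R (Fin (n + 1) → R)}
    {c : ℕ → R} {s : ℕ → ℕ} (h : ∀ k ≤ n, f (natSingle R n k) = c k • natSingle R n (s k))
    (hs : ∀ k, n < k → c k = 0 ∨ n < s k) (k : ℕ) :
    f (natSingle R n k) = c k • natSingle R n (s k) := by
  rcases le_or_gt k n with hk | hk
  · exact h k hk
  rw [natSingle_of_lt hk, map_zero]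
  rcases hs k hk with hc | hs
  · rw [hc, zero_smul]
  · rw [natSingle_of_lt hs, smul_zero]

lemma LinearMap.apply_map_eq_of_natSingle
    {F : (Fin (n + 1) → ℂ) →ₗ⋆[ℂ] (Fin (n + 1) → ℂ) →ₗ[ℂ] ℂ}
    {S T : Module.End ℂ (Fin (n + 1) → ℂ)} {c : ℂ}
    (h : ∀ k ≤ n, ∀ l ≤ n,
      F (S (natSingle ℂ n k)) (natSingle ℂ n l) = c * F (natSingle ℂ n k) (T (natSingle ℂ n l)))
    (v w : Fin (n + 1) → ℂ) : F (S v) w = c * F v (T w) := by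
  have := LinearMap.ext_basis (B := F.comp S) (B' := c • F.compl₂ T)
    (Pi.basisFun ℂ _) (Pi.basisFun ℂ _) fun i j => by
      simpa [natSingle_val] using h i (Nat.lt_succ_iff.mp i.isLt) j (Nat.lt_succ_iff.mp j.isLt)
  simpa using LinearMap.congr_fun₂ this v w

end NatSingle

namespace WeightChain

variable {R V : Type*} [CommRing R] [AddCommGroup V] [Module R V]
  {e : ℕ → V} {H Xp Xm : Module.End R V} {μ : R} {a : ℕ → R}

lemma raising_weight (hH : ∀ k, H (e k) = (μ - 2 * k) • e k)
    (hXp : ∀ k, Xp (e k) = a k • e (k - 1)) (ha : a 0 = 0) (k : ℕ) :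
    H (Xp (e k)) - Xp (H (e k)) = (2 : R) • Xp (e k) := by
  rcases k with _ | k
  · simp [hXp, hH, ha]
  · simp only [hXp, map_smul, hH, Nat.add_sub_cancel, smul_smul, ← sub_smul]
    congr 1
    push_cast
    ring

lemma lowering_weight (hH : ∀ k, H (e k) = (μ - 2 * k) • e k)
    (hXm : ∀ k, Xm (e k) = e (k + 1)) (k : ℕ) :
    H (Xm (e k)) - Xm (H (e k)) = (-2 : R) • Xm (e k) := by
  simp only [hXm, map_smul, hH, ← sub_smul]
  congr 1
  push_cast
  ring

lemma raising_lowering_commutator (hXp : ∀ k, Xp (e k) = a k • e (k - 1)) (ha : a 0 = 0)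
    (hXm : ∀ k, Xm (e k) = e (k + 1)) (k : ℕ) :
    Xp (Xm (e k)) - Xm (Xp (e k)) = (a (k + 1) - a k) • e k := by
  rcases k with _ | k
  · simp [hXp, hXm, ha]
  · simp only [hXm, hXp, map_smul, Nat.add_sub_cancel, sub_smul]

lemma lowering_pow_apply (hXm : ∀ k, Xm (e k) = e (k + 1)) (j k : ℕ) :
    (Xm ^ j) (e k) = e (k + j) := by
  induction j generalizing k with
  | zero => simp
  | succ j ih => rw [pow_succ, Module.End.mul_apply, hXm, ih, add_assoc, add_comm 1]

lemma raising_pow_succ_apply_self (hXp : ∀ k, Xp (e k) = a k • e (k - 1)) (ha : a 0 = 0)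
    (k : ℕ) : (Xp ^ (k + 1)) (e k) = 0 := by
  induction k with
  | zero => simp [hXp, ha]
  | succ k ih =>
    rw [pow_succ, Module.End.mul_apply, hXp, map_smul, Nat.add_sub_cancel, ih, smul_zero]

lemma raising_pow_apply_of_lt (hXp : ∀ k, Xp (e k) = a k • e (k - 1)) (ha : a 0 = 0)
    {j k : ℕ} (hkj : k < j) : (Xp ^ j) (e k) = 0 := by
  obtain ⟨i, rfl⟩ := Nat.exists_eq_add_of_lt hkj
  rw [show k + i + 1 = i + (k + 1) by omega, pow_add, Module.End.mul_apply,
    raising_pow_succ_apply_self hXp ha, map_zero]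

end WeightChain

noncomputable def weightedForm (n : ℕ) (g : ℕ → ℂ) :
    (Fin (n + 1) → ℂ) →ₗ⋆[ℂ] (Fin (n + 1) → ℂ) →ₗ[ℂ] ℂ :=
  Matrix.toLinearMapₛₗ₂' ℂ (starRingEnd ℂ) (RingHom.id ℂ) (Matrix.diagonal fun i => g i)

section WeightedForm

variable {n : ℕ} {g : ℕ → ℂ}

lemma weightedForm_apply (v w : Fin (n + 1) → ℂ) :
    weightedForm n g v w = ∑ k, starRingEnd ℂ (v k) * w k * g k := by
  simp [weightedForm, Matrix.toLinearMapₛₗ₂'_apply, Matrix.diagonal_apply, mul_assoc]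

lemma weightedForm_natSingle_natSingle {k l : ℕ} (h : k ≤ n ∨ l ≤ n) :
    weightedForm n g (natSingle ℂ n k) (natSingle ℂ n l) = if k = l then g k else 0 := by
  by_cases hkl : k ≤ n ∧ l ≤ n
  · obtain ⟨hk, hl⟩ := hkl
    rw [← Fin.val_mk (Nat.lt_succ_of_le hk), ← Fin.val_mk (Nat.lt_succ_of_le hl), natSingle_val,
      natSingle_val, weightedForm, Matrix.toLinearMapₛₗ₂'_single, Matrix.diagonal_apply]
    simp
  · have hne : k ≠ l := by omega
    rcases h with hk | hl
    · rw [natSingle_of_lt (by omega : n < l), map_zero, if_neg hne]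
    · rw [natSingle_of_lt (by omega : n < k), map_zero, LinearMap.zero_apply, if_neg hne]

lemma weightedForm_self_pos (hg : ∀ k ≤ n, 0 < g k) {v : Fin (n + 1) → ℂ} (hv : v ≠ 0) :
    0 < weightedForm n g v v := by
  obtain ⟨i, hi⟩ := Function.ne_iff.mp hv
  rw [weightedForm_apply]
  refine Finset.sum_pos' (fun k _ => ?_) ⟨i, Finset.mem_univ i, ?_⟩
  · exact mul_nonneg (star_mul_self_nonneg _) (hg k (Nat.lt_succ_iff.mp k.isLt)).le
  · exact mul_pos (star_mul_self_pos (.of_ne_zero hi)) (hg i (Nat.lt_succ_iff.mp i.isLt))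

variable {H Xp Xm : Module.End ℂ (Fin (n + 1) → ℂ)} {μ : ℂ} {a : ℕ → ℂ}

lemma weightedForm_raising_adjoint
    (hXp : ∀ k, Xp (natSingle ℂ n k) = a k • natSingle ℂ n (k - 1))
    (hXm : ∀ k, Xm (natSingle ℂ n k) = natSingle ℂ n (k + 1)) (ha0 : a 0 = 0)
    (ha : ∀ k, starRingEnd ℂ (a (k + 1)) * g k = -g (k + 1)) (v w : Fin (n + 1) → ℂ) :
    weightedForm n g (Xp v) w = -weightedForm n g v (Xm w) := by
  rw [← neg_one_mul]
  refine LinearMap.apply_map_eq_of_natSingle (fun k hk l hl => ?_) v w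
  rw [hXp, hXm, LinearMap.map_smulₛₗ₂, smul_eq_mul, weightedForm_natSingle_natSingle (by omega),
    weightedForm_natSingle_natSingle (Or.inl hk)]
  rcases k with _ | k
  · simp [ha0]
  · simp only [add_left_inj, Nat.add_sub_cancel]
    split_ifs with hkl
    · rw [hkl, ha]; ring
    · simp

lemma weightedForm_lowering_adjoint
    (hXp : ∀ k, Xp (natSingle ℂ n k) = a k • natSingle ℂ n (k - 1))
    (hXm : ∀ k, Xm (natSingle ℂ n k) = natSingle ℂ n (k + 1)) (ha0 : a 0 = 0)
    (ha : ∀ k, a (k + 1) * g k = -g (k + 1)) (v w : Fin (n + 1) → ℂ) :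
    weightedForm n g (Xm v) w = -weightedForm n g v (Xp w) := by
  rw [← neg_one_mul]
  refine LinearMap.apply_map_eq_of_natSingle (fun k hk l hl => ?_) v w
  rw [hXp, hXm, LinearMap.map_smul, smul_eq_mul, weightedForm_natSingle_natSingle (Or.inr hl),
    weightedForm_natSingle_natSingle (Or.inl hk)]
  rcases l with _ | l
  · simp [ha0]
  · simp only [add_left_inj, Nat.add_sub_cancel]
    split_ifs with hkl
    · rw [hkl, ha]; ring
    · simp

lemma weightedForm_weight_adjoint
    (hH : ∀ k, H (natSingle ℂ n k) = (μ - 2 * k) • natSingle ℂ n k)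
    (hμ : starRingEnd ℂ μ = μ) (v w : Fin (n + 1) → ℂ) :
    weightedForm n g (H v) w = weightedForm n g v (H w) := by
  rw [← one_mul (weightedForm n g v (H w))]
  refine LinearMap.apply_map_eq_of_natSingle (fun k hk l hl => ?_) v w
  rw [hH, hH, LinearMap.map_smulₛₗ₂, LinearMap.map_smul, smul_eq_mul, smul_eq_mul,
    weightedForm_natSingle_natSingle (Or.inl hk)]
  split_ifs with hkl
  · simp [hkl, hμ, map_ofNat]
  · simp

end WeightedForm

noncomputable def raisingCoeff (q : ℂ) (μ k : ℕ) : ℂ := qInt q k * qInt q ((μ : ℤ) - k + 1)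

noncomputable def chainWeight (q : ℂ) (lam k : ℕ) : ℂ :=
  ∏ j ∈ Finset.range k, qInt q (j + 1) * qInt q ((lam : ℤ) - (j + 1) + 1)

section RaisingCoeff

variable {q : ℂ} {lam M : ℕ}

@[simp] lemma raisingCoeff_zero (μ : ℕ) : raisingCoeff q μ 0 = 0 := by simp [raisingCoeff]

lemma raisingCoeff_succ_sub (μ k : ℕ) :
    raisingCoeff q μ (k + 1) - raisingCoeff q μ k = qInt q ((μ : ℤ) - 2 * k) := by
  rw [← qInt_succ_mul_sub, raisingCoeff, raisingCoeff]
  push_cast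
  ring_nf

lemma conj_raisingCoeff (hq : ∀ k, starRingEnd ℂ (qInt q k) = qInt q k) (μ k : ℕ) :
    starRingEnd ℂ (raisingCoeff q μ k) = raisingCoeff q μ k := by
  rw [raisingCoeff, map_mul, hq, hq]

lemma raisingCoeff_succ_of_pow_eq_neg_one (hqM : q ^ M = -1) (k : ℕ) :
    raisingCoeff q (lam + M) (k + 1) = -(qInt q (k + 1) * qInt q ((lam : ℤ) - k)) := by
  rw [raisingCoeff, ← mul_neg, ← qInt_add_of_pow_eq_neg_one hqM]
  push_cast
  ring_nf

lemma raisingCoeff_top_of_pow_eq_neg_one (hqM : q ^ M = -1) :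
    raisingCoeff q (lam + M) (lam + 1) = 0 := by
  rw [raisingCoeff_succ_of_pow_eq_neg_one hqM, sub_self, qInt_zero, mul_zero, neg_zero]

lemma chainWeight_succ (k : ℕ) :
    chainWeight q lam (k + 1) =
      chainWeight q lam k * (qInt q (k + 1) * qInt q ((lam : ℤ) - k)) := by
  rw [chainWeight, chainWeight, Finset.prod_range_succ,
    show (lam : ℤ) - (k + 1) + 1 = lam - k by ring]

lemma raisingCoeff_mul_chainWeight (hqM : q ^ M = -1) (k : ℕ) :
    raisingCoeff q (lam + M) (k + 1) * chainWeight q lam k = -chainWeight q lam (k + 1) := by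
  rw [raisingCoeff_succ_of_pow_eq_neg_one hqM, chainWeight_succ]
  ring

lemma chainWeight_pos (hq : ∀ t : ℤ, 1 ≤ t → t ≤ lam → 0 < qInt q t) {k : ℕ} (hk : k ≤ lam) :
    0 < chainWeight q lam k :=
  Finset.prod_pos fun j hj => by
    rw [Finset.mem_range] at hj
    exact mul_pos (hq _ (by omega) (by omega)) (hq _ (by omega) (by omega))

end RaisingCoeff

theorem stmt11_general (n m : ℕ) (hmeven : Even m) (hnodd : Odd n)
    (q : ℂ) (hq : q = Complex.exp (2 * Real.pi * Complex.I * n / m))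
    (M : ℕ) (hM : M = m / 2)
    (lam : ℕ) (hlam : 2 * n * lam < m)
    (mu : ℕ) (hmu : mu = lam + M)
    (qint : ℤ → ℂ) (hqint : ∀ k : ℤ, qint k = (q ^ k - q ^ (-k)) / (q - q⁻¹))
    (e : ℕ → Fin (lam + 1) → ℂ)
    (he : ∀ k : ℕ, e k =
      if h : k < lam + 1 then Pi.single (⟨k, h⟩ : Fin (lam + 1)) (1 : ℂ) else 0)
    (H Xp Xm : (Fin (lam + 1) → ℂ) →ₗ[ℂ] (Fin (lam + 1) → ℂ))
    (hH : ∀ k : ℕ, k ≤ lam → H (e k) = ((mu : ℂ) - 2 * k) • e k)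
    (hXm : ∀ k : ℕ, k ≤ lam → Xm (e k) = e (k + 1))
    (hXp : ∀ k : ℕ, k ≤ lam →
      Xp (e k) = (qint k * qint ((mu : ℤ) - k + 1)) • e (k - 1))
    (g : ℕ → ℂ)
    (hg : ∀ k : ℕ, g k = ∏ j ∈ Finset.range k, qint (j + 1) * qint ((lam : ℤ) - (j + 1) + 1))
    (B : (Fin (lam + 1) → ℂ) → (Fin (lam + 1) → ℂ) → ℂ)
    (hB : ∀ v w, B v w = ∑ k : Fin (lam + 1), (starRingEnd ℂ) (v k) * w k * g (k : ℕ)) :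
    -- q is an even root of unity
    (q ^ M = -1) ∧
    -- (i) commutation relations and nilpotency
    (H ∘ₗ Xp - Xp ∘ₗ H = (2 : ℂ) • Xp) ∧
    (H ∘ₗ Xm - Xm ∘ₗ H = (-2 : ℂ) • Xm) ∧
    (∀ k : ℕ, k ≤ lam →
      Xp (Xm (e k)) - Xm (Xp (e k)) = qint ((mu : ℤ) - 2 * k) • e k) ∧
    (Xp ^ M = 0) ∧ (Xm ^ M = 0) ∧
    -- (ii) positivity
    (∀ k l : ℕ, k ≤ lam → l ≤ lam → B (e k) (e l) = if k = l then g k else 0) ∧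
    (∀ v : Fin (lam + 1) → ℂ, v ≠ 0 → (B v v).im = 0 ∧ 0 < (B v v).re) ∧
    -- (iii) unitarity for the noncompact real form
    (∀ v w, B (Xp v) w = -B v (Xm w)) ∧
    (∀ v w, B (Xm v) w = -B v (Xp w)) ∧
    (∀ v w, B (H v) w = B v (H w)) := by
  obtain rfl : qint = qInt q := funext hqint
  obtain rfl : e = natSingle ℂ lam := funext he
  obtain rfl : g = chainWeight q lam := funext hg
  obtain rfl : B = fun v w => weightedForm lam (chainWeight q lam) v w :=
    funext₂ fun v w => (hB v w).trans (weightedForm_apply v w).symm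
  subst hmu
  have hm : m = 2 * M := by obtain ⟨r, hr⟩ := hmeven; omega
  have hlamM : lam < M := by
    have : 2 * lam ≤ 2 * n * lam := by nlinarith [hnodd.pos]
    omega
  have hqM : q ^ M = -1 := by
    rw [hq, hM]
    exact exp_two_pi_mul_I_div_pow_half hmeven hnodd (by omega)
  have hreal : ∀ k, starRingEnd ℂ (qInt q k) = qInt q k :=
    hq ▸ conj_qInt_exp_two_pi_mul_I_div n m
  have hpos : ∀ t : ℤ, 1 ≤ t → t ≤ lam → 0 < qInt q t :=
    hq ▸ fun t => qInt_exp_two_pi_mul_I_div_pos hlam hnodd.pos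
  have hH' := LinearMap.apply_natSingle_eq_smul hH fun k hk => Or.inr hk
  have hXm' : ∀ k, Xm (natSingle ℂ lam k) = natSingle ℂ lam (k + 1) := by
    simpa using LinearMap.apply_natSingle_eq_smul (f := Xm) (c := fun _ => 1) (s := (· + 1))
      (by simpa using hXm) fun k hk => Or.inr (by omega)
  -- `X⁺ e_{λ+1} = 0` is consistent with the formula because `a (λ + 1)` contains `[M] = 0`
  have hXp' := LinearMap.apply_natSingle_eq_smul (c := raisingCoeff q (lam + M)) hXp
    fun k hk => by
      rcases (Nat.succ_le_of_lt hk).eq_or_lt with rfl | hk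
      · exact Or.inl (raisingCoeff_top_of_pow_eq_neg_one hqM)
      · exact Or.inr (by omega)
  refine ⟨hqM, ?_, ?_, ?_, ?_, ?_, ?_, ?_, ?_, ?_, ?_⟩
  · refine LinearMap.ext_natSingle fun k _ => ?_
    simpa using WeightChain.raising_weight hH' hXp' (raisingCoeff_zero _) k
  · refine LinearMap.ext_natSingle fun k _ => ?_
    simpa using WeightChain.lowering_weight hH' hXm' k
  · intro k _
    rw [WeightChain.raising_lowering_commutator hXp' (raisingCoeff_zero _) hXm',
      raisingCoeff_succ_sub]
  · refine LinearMap.ext_natSingle fun k hk => ?_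
    rw [WeightChain.raising_pow_apply_of_lt hXp' (raisingCoeff_zero _) (by omega),
      LinearMap.zero_apply]
  · refine LinearMap.ext_natSingle fun k hk => ?_
    rw [WeightChain.lowering_pow_apply hXm', natSingle_of_lt (by omega), LinearMap.zero_apply]
  · exact fun k l hk _ => weightedForm_natSingle_natSingle (Or.inl hk)
  · intro v hv
    obtain ⟨hre, him⟩ :=
      Complex.pos_iff.mp (weightedForm_self_pos (fun _ => chainWeight_pos hpos) hv)
    exact ⟨him.symm, hre⟩
  · exact weightedForm_raising_adjoint hXp' hXm' (raisingCoeff_zero _) fun k => by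
      rw [conj_raisingCoeff hreal, raisingCoeff_mul_chainWeight hqM]
  · exact weightedForm_lowering_adjoint hXp' hXm' (raisingCoeff_zero _)
      (raisingCoeff_mul_chainWeight hqM)
  · exact weightedForm_weight_adjoint hH' (Complex.conj_natCast _)

/-- For even `m ≥ 4`, odd `n` coprime to `m`, `q = exp(2πi n/m)`, `M = m/2`
(so `q^M = −1`), `0 ≤ λ` with `2nλ < m` and `μ = λ + M`, the operators on `V = ℂ^{λ+1}`
given by `H e_k = (μ − 2k) e_k`, `X⁻ e_k = e_{k+1}` (`e_{λ+1} := 0`),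
`X⁺ e_k = [k][μ−k+1] e_{k−1}` satisfy (i) the `U_q(sl₂)` relations and
`(X⁺)^M = (X⁻)^M = 0`, (ii) the Hermitian form with `⟨e_k, e_l⟩ = δ_{kl}
∏_{j=1}^k [j][λ−j+1]` is positive definite, and (iii) `⟨X^± v, w⟩ = −⟨v, X^∓ w⟩`,
`⟨H v, w⟩ = ⟨v, H w⟩`: a finite-dimensional unitary highest-weight representation of the
noncompact real form `(X^±)* = −X^∓`, `H* = H` of `U_q^{fin}(sl(2,ℝ))` at the even root
of unity `q`. -/
theorem stmt11 (n m : ℕ) (hm4 : 4 ≤ m) (hmeven : Even m) (hn : 0 < n) (hnodd : Odd n)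
    (hcop : Nat.Coprime n m)
    (q : ℂ) (hq : q = Complex.exp (2 * Real.pi * Complex.I * n / m))
    (M : ℕ) (hM : M = m / 2)
    (lam : ℕ) (hlam : 2 * n * lam < m)
    (mu : ℕ) (hmu : mu = lam + M)
    (qint : ℤ → ℂ) (hqint : ∀ k : ℤ, qint k = (q ^ k - q ^ (-k)) / (q - q⁻¹))
    (e : ℕ → Fin (lam + 1) → ℂ)
    (he : ∀ k : ℕ, e k =
      if h : k < lam + 1 then Pi.single (⟨k, h⟩ : Fin (lam + 1)) (1 : ℂ) else 0)
    (H Xp Xm : (Fin (lam + 1) → ℂ) →ₗ[ℂ] (Fin (lam + 1) → ℂ))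
    (hH : ∀ k : ℕ, k ≤ lam → H (e k) = ((mu : ℂ) - 2 * k) • e k)
    (hXm : ∀ k : ℕ, k ≤ lam → Xm (e k) = e (k + 1))
    (hXp : ∀ k : ℕ, k ≤ lam →
      Xp (e k) = (qint k * qint ((mu : ℤ) - k + 1)) • e (k - 1))
    (g : ℕ → ℂ)
    (hg : ∀ k : ℕ, g k = ∏ j ∈ Finset.range k, qint (j + 1) * qint ((lam : ℤ) - (j + 1) + 1))
    (B : (Fin (lam + 1) → ℂ) → (Fin (lam + 1) → ℂ) → ℂ)
    (hB : ∀ v w, B v w = ∑ k : Fin (lam + 1), (starRingEnd ℂ) (v k) * w k * g (k : ℕ)) :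
    -- q is an even root of unity
    (q ^ M = -1) ∧
    -- (i) commutation relations and nilpotency
    (H ∘ₗ Xp - Xp ∘ₗ H = (2 : ℂ) • Xp) ∧
    (H ∘ₗ Xm - Xm ∘ₗ H = (-2 : ℂ) • Xm) ∧
    (∀ k : ℕ, k ≤ lam →
      Xp (Xm (e k)) - Xm (Xp (e k)) = qint ((mu : ℤ) - 2 * k) • e k) ∧
    (Xp ^ M = 0) ∧ (Xm ^ M = 0) ∧
    -- (ii) positivity
    (∀ k l : ℕ, k ≤ lam → l ≤ lam → B (e k) (e l) = if k = l then g k else 0) ∧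
    (∀ v : Fin (lam + 1) → ℂ, v ≠ 0 → (B v v).im = 0 ∧ 0 < (B v v).re) ∧
    -- (iii) unitarity for the noncompact real form
    (∀ v w, B (Xp v) w = -B v (Xm w)) ∧
    (∀ v w, B (Xm v) w = -B v (Xp w)) ∧
    (∀ v w, B (H v) w = B v (H w)) :=
  stmt11_general n m hmeven hnodd q hq M hM lam hlam mu hmu qint hqint e he H Xp Xm hH hXm hXp g hg
    B hB
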